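/- For any real numbers a and c with c > 0, min over x ∈ R of [c(x + a)² + |x|] equals 2c·H(a, 1/(2c)) where H is the Huber loss H(x,y) = x²/2 for |x| ≤ y and y(|x| − y/2) otherwise. -/

import Mathlib

open Real

/-- The Huber loss with threshold `y`. -/
noncomputable def huber (x y : ℝ) : ℝ := if |x| ≤ y then x^2/2 else y*(|x| - y/2)

/-!
The Huber loss is the Moreau envelope of `y|·|`: `H(a, y) = min_x [(x + a)²/2 + y|x|]`,
the minimum being attained at `x = 0` when `|a| ≤ y` and at `x = ±y - a` (so that `x + a = ±y`)
otherwise. Scaling by `2c` with `y = 1/(2c)` gives the theorem.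
-/

theorem sq_div_two_le_add_mul_abs {a y : ℝ} (x : ℝ) (ha : |a| ≤ y) :
    a ^ 2 / 2 ≤ (x + a) ^ 2 / 2 + y * |x| := by
  have : |a| * |x| ≤ y * |x| := mul_le_mul_of_nonneg_right ha (abs_nonneg x)
  nlinarith [sq_nonneg x, neg_abs_le (a * x), abs_mul a x]

theorem mul_abs_sub_le_add_mul_abs (a x : ℝ) {y : ℝ} (hy : 0 ≤ y) :
    y * (|a| - y / 2) ≤ (x + a) ^ 2 / 2 + y * |x| := by
  -- `|a| ≤ |x + a| + |x|` reduces this to `(|x + a| - y)² ≥ 0`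
  have htri : |a| ≤ |x + a| + |x| := by simpa using abs_sub (x + a) x
  nlinarith [sq_nonneg (|x + a| - y), sq_abs (x + a), mul_le_mul_of_nonneg_left htri hy]

theorem huber_le_add_mul_abs (a x : ℝ) {y : ℝ} (hy : 0 ≤ y) :
    huber a y ≤ (x + a) ^ 2 / 2 + y * |x| := by
  unfold huber
  split_ifs with ha
  · exact sq_div_two_le_add_mul_abs x ha
  · exact mul_abs_sub_le_add_mul_abs a x hy

theorem exists_add_mul_abs_eq_huber (a y : ℝ) :
    ∃ x, (x + a) ^ 2 / 2 + y * |x| = huber a y := by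
  unfold huber
  split_ifs with ha
  · exact ⟨0, by simp⟩
  rcases le_or_gt 0 a with ha₀ | ha₀
  · rw [abs_of_nonneg ha₀] at ha ⊢
    exact ⟨y - a, by rw [abs_of_nonpos (by linarith)]; ring⟩
  · rw [abs_of_neg ha₀] at ha ⊢
    exact ⟨-y - a, by rw [abs_of_nonneg (by linarith)]; ring⟩

theorem isLeast_huber (a : ℝ) {y : ℝ} (hy : 0 ≤ y) :
    IsLeast ((fun x => (x + a) ^ 2 / 2 + y * |x|) '' Set.univ) (huber a y) := by
  obtain ⟨x, hx⟩ := exists_add_mul_abs_eq_huber a y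
  exact ⟨⟨x, trivial, hx⟩, by rintro _ ⟨x, -, rfl⟩; exact huber_le_add_mul_abs a x hy⟩

/-- `min_x [c(x + a)² + |x|] = 2c·H(a, 1/(2c))` for `c > 0`. -/
theorem stmt17 (a c : ℝ) (hc : 0 < c) :
    IsLeast ((fun x => c*(x + a)^2 + |x|) '' Set.univ) (2*c*huber a (1/(2*c))) := by
  have hscale : (fun x => c*(x + a)^2 + |x|) =
      (2 * c * ·) ∘ fun x => (x + a) ^ 2 / 2 + 1 / (2 * c) * |x| := by
    funext x
    simp only [Function.comp_apply]
    field_simp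
  rw [hscale, Set.image_comp]
  exact (strictMono_mul_left_of_pos (by positivity)).map_isLeast.2
    (isLeast_huber a (by positivity))
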